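/- For every l ∈ ℤ, the coefficient of z^m in P_{κ,a;l} vanishes for all m > l + |κ|, and the coefficient of z^{l+|κ|} in P_{κ,a;l} equals (∏_{j=1}^n a_j)·(∏_{1≤i<j≤n}(k_j − k_i))·(∏_{i=1}^n (l − k_i)) (the Vandermonde determinant of the nodes k_1,…,k_n,l times ∏ a_j). In particular this leading coefficient is nonzero if and only if l ∉ {k_1,…,k_n}. -/

import Mathlib

/-!
Each of the first `n` columns is a sum of two monomial columns, and `D^i (c z^e) = c e^i z^e`,
so by multilinearity `P_{κ,a;l}` is a sum of `2^n` determinants with monomial columns; each of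
these is `(∏ c_j) z^{Σ e_j}` times the Vandermonde determinant of the exponents `e_j`. As every
`k_j > 0`, choosing `a_j z^{k_j}` in every column is the only choice reaching the degree
`l + |κ|`; all others have strictly lower degree.
-/

/-- The derivation `D = z·d/dz` on Laurent polynomials: `D(z^m) = m·z^m`. -/
noncomputable def Dop (P : LaurentPolynomial ℂ) : LaurentPolynomial ℂ :=
  Finsupp.sum (AddMonoidAlgebra.coeff P) fun m c => LaurentPolynomial.C ((m : ℂ) * c) * LaurentPolynomial.T m

/-- `Φ_k(a;z) = a·z^k + a⁻¹·z^{−k}`. -/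
noncomputable def PhiL (k : ℕ) (a : ℂ) : LaurentPolynomial ℂ :=
  LaurentPolynomial.C a * LaurentPolynomial.T (k : ℤ) +
    LaurentPolynomial.C a⁻¹ * LaurentPolynomial.T (-(k : ℤ))

/-- `W_{κ,a}`: the determinant of the `n×n` matrix with `(i,j)` entry `D^{i−1}Φ_{k_j}(a_j;z)`. -/
noncomputable def Wka (n : ℕ) (k : Fin n → ℕ) (a : Fin n → ℂ) : LaurentPolynomial ℂ :=
  Matrix.det (Matrix.of fun i j : Fin n => Dop^[(i : ℕ)] (PhiL (k j) (a j)))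

/-- The exceptional Laurent orthogonal polynomial `P_{κ,a;l}`: the determinant of the
`(n+1)×(n+1)` matrix with `(i,j)` entry `D^{i−1}Φ_{k_j}(a_j;z)` for `j ≤ n` and
`D^{i−1}z^l` in the last column. -/
noncomputable def Pka (n : ℕ) (k : Fin n → ℕ) (a : Fin n → ℂ) (l : ℤ) : LaurentPolynomial ℂ :=
  Matrix.det (Matrix.of fun i j : Fin (n + 1) =>
    Fin.lastCases (Dop^[(i : ℕ)] (LaurentPolynomial.T l))
      (fun j' => Dop^[(i : ℕ)] (PhiL (k j') (a j'))) j)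

/-- Evaluation of a Laurent polynomial at `z ∈ ℂ`. -/
noncomputable def evalL (P : LaurentPolynomial ℂ) (z : ℂ) : ℂ :=
  Finsupp.sum (AddMonoidAlgebra.coeff P) fun m c => c * z ^ m

/-- The dagger operation: `(Σ c_m z^m)† = Σ conj(c_m)·z^{−m}`. -/
noncomputable def dag (P : LaurentPolynomial ℂ) : LaurentPolynomial ℂ :=
  Finsupp.sum (AddMonoidAlgebra.coeff P) fun m c => LaurentPolynomial.C ((starRingEnd ℂ) c) * LaurentPolynomial.T (-m)

/-- The set `Z_κ` of zeros of `W_{κ,a}` in `ℂ\{0}`. -/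
def Zka (n : ℕ) (k : Fin n → ℕ) (a : Fin n → ℂ) : Set ℂ :=
  {z | z ≠ 0 ∧ evalL (Wka n k a) z = 0}

/-- The multiplicity of `z₀ ≠ 0` as a zero of the Laurent polynomial `W`, computed as the
root multiplicity of `z₀` in a polynomial representative `f'` with `toLaurent f' = W · T^d`. -/
noncomputable def multL (W : LaurentPolynomial ℂ) (z₀ : ℂ) : ℕ :=
  Polynomial.rootMultiplicity z₀ (W.exists_T_pow).choose_spec.choose

/-- `ψ` is quasi-invariant at `x₀` with multiplicity `m`: `(x−x₀)^m·ψ(x)` extends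
analytically across `x₀` and all its odd-order derivatives of orders `1,3,…,2m−1`
vanish at `x₀`. -/
def QuasiInv (ψ : ℂ → ℂ) (x₀ : ℂ) (m : ℕ) : Prop :=
  ∃ F : ℂ → ℂ, AnalyticAt ℂ F x₀ ∧
    (∀ᶠ x in nhdsWithin x₀ {x₀}ᶜ, F x = (x - x₀) ^ m * ψ x) ∧
    ∀ j : ℕ, 1 ≤ j → j ≤ m → iteratedDeriv (2 * j - 1) F x₀ = 0

/-- `Q_κ`: Laurent polynomials `P` such that `Φ(x) = P(e^{ix})/W_{κ,a}(e^{ix})` is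
quasi-invariant at every point `x_j ∈ ℂ` with `e^{ix_j} ∈ Z_κ`, with the multiplicity of
the corresponding zero. -/
def Qka (n : ℕ) (k : Fin n → ℕ) (a : Fin n → ℂ) : Set (LaurentPolynomial ℂ) :=
  {P | ∀ x₀ : ℂ, Complex.exp (Complex.I * x₀) ∈ Zka n k a →
    QuasiInv (fun x => evalL P (Complex.exp (Complex.I * x)) /
        evalL (Wka n k a) (Complex.exp (Complex.I * x))) x₀
      (multL (Wka n k a) (Complex.exp (Complex.I * x₀)))}

/-- `Q_{κ,C}`: as `Q_κ`, but quasi-invariance is required only at real points `x_j ∈ ℝ`. -/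
def QkaC (n : ℕ) (k : Fin n → ℕ) (a : Fin n → ℂ) : Set (LaurentPolynomial ℂ) :=
  {P | ∀ x₀ : ℝ, Complex.exp (Complex.I * (x₀ : ℂ)) ∈ Zka n k a →
    QuasiInv (fun x => evalL P (Complex.exp (Complex.I * x)) /
        evalL (Wka n k a) (Complex.exp (Complex.I * x))) (x₀ : ℂ)
      (multL (Wka n k a) (Complex.exp (Complex.I * (x₀ : ℂ))))}

/-- `μ > 0` is admissible for the bilinear form if `μ ≠ |z_i|` for every zero `z_i ∈ Z_κ`. -/
def AdmMu (n : ℕ) (k : Fin n → ℕ) (a : Fin n → ℂ) (μ : ℝ) : Prop :=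
  0 < μ ∧ ∀ z ∈ Zka n k a, μ ≠ ‖z‖

/-- The complex bilinear form `(P,Q) = (1/2πi)·∮_{|z|=μ} P(z)·Q(z)·W_{κ,a}(z)^{−2}·dz/z`. -/
noncomputable def formB (n : ℕ) (k : Fin n → ℕ) (a : Fin n → ℂ) (μ : ℝ)
    (P Q : LaurentPolynomial ℂ) : ℂ :=
  (2 * Real.pi * Complex.I)⁻¹ *
    ∮ z in C(0, μ), evalL P z * evalL Q z / ((evalL (Wka n k a) z) ^ 2 * z)

/-- `μ > 0` is admissible for the Hermitian form if `1 < max(μ, 1/μ) < ν`, where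
`ν = min{|z_i| : z_i ∈ Z_κ, |z_i| > 1}` (`ν = +∞` if no such zero exists). -/
def AdmMuH (n : ℕ) (k : Fin n → ℕ) (a : Fin n → ℂ) (μ : ℝ) : Prop :=
  0 < μ ∧ 1 < max μ μ⁻¹ ∧
    ∀ z ∈ Zka n k a, 1 < ‖z‖ → max μ μ⁻¹ < ‖z‖

/-- The sesquilinear product
`⟨P,Q⟩_L = (1/2πi)·∮_{|z|=μ} P(z)·Q†(z)·(W_{κ,a}(z)·W_{κ,a}†(z))⁻¹·dz/z`. -/
noncomputable def formH (n : ℕ) (k : Fin n → ℕ) (a : Fin n → ℂ) (μ : ℝ)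
    (P Q : LaurentPolynomial ℂ) : ℂ :=
  (2 * Real.pi * Complex.I)⁻¹ *
    ∮ z in C(0, μ), evalL P z * evalL (dag Q) z /
      (evalL (Wka n k a) z * evalL (dag (Wka n k a)) z * z)

open LaurentPolynomial Finset

theorem Fin.prod_Ioi_castSucc {M : Type*} [CommMonoid M] {n : ℕ} (f : Fin (n + 1) → M)
    (i : Fin n) : ∏ j ∈ Ioi i.castSucc, f j = (∏ j ∈ Ioi i, f j.castSucc) * f (Fin.last n) := by
  have hIoi : Ioi i.castSucc = insert (Fin.last n) ((Ioi i).map Fin.castSuccEmb) := by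
    rw [Fin.map_castSuccEmb_Ioi, Ioo_insert_right (Fin.castSucc_lt_last i)]
    rfl
  rw [hIoi, prod_insert (by simp), prod_map, mul_comm]
  rfl

theorem Fin.prod_prod_Ioi_sub_castSucc {R : Type*} [CommRing R] {n : ℕ} (v : Fin (n + 1) → R) :
    ∏ i, ∏ j ∈ Ioi i, (v j - v i) =
      (∏ i : Fin n, ∏ j ∈ Ioi i, (v j.castSucc - v i.castSucc)) *
        ∏ i : Fin n, (v (Fin.last n) - v i.castSucc) := by
  simp [Fin.prod_univ_castSucc, Fin.prod_Ioi_castSucc, prod_mul_distrib,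
    show Ioi (Fin.last n) = ∅ from Ioi_top]

theorem Matrix.det_of_sum_columns {R ι β : Type*} [CommRing R] [Fintype ι] [DecidableEq ι]
    [Fintype β] (g : ι → β → ι → R) :
    (Matrix.of fun i j => ∑ b, g j b i).det =
      ∑ r : ι → β, (Matrix.of fun i j => g j (r j) i).det := by
  simp_rw [← Matrix.det_transpose (Matrix.of _)]
  convert (Matrix.detRowAlternating (R := R) (n := ι)).map_sum g using 3
  · congr 1
    ext i j
    simp [Finset.sum_apply]
  · rfl

theorem LaurentPolynomial.T_sum {R ι : Type*} [CommSemiring R] (s : Finset ι) (e : ι → ℤ) :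
    (T (∑ j ∈ s, e j) : R[T;T⁻¹]) = ∏ j ∈ s, T (e j) := by
  simpa [← ofAdd_sum] using map_prod (AddMonoidAlgebra.of R ℤ) (fun j => Multiplicative.ofAdd (e j)) s

theorem Dop_C_mul_T (c : ℂ) (m : ℤ) : Dop (C c * T m) = C (m * c) * T m := by
  rw [← single_eq_C_mul_T, Dop, AddMonoidAlgebra.coeff_single, Finsupp.sum_single_index (by simp)]

theorem Dop_zero : Dop 0 = 0 := by
  simp [Dop]

theorem Dop_add (P Q : LaurentPolynomial ℂ) : Dop (P + Q) = Dop P + Dop Q := by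
  rw [Dop, Dop, Dop, AddMonoidAlgebra.coeff_add, Finsupp.sum_add_index (by simp)]
  intro m _ b₁ b₂
  rw [mul_add, map_add, add_mul]

theorem Dop_iterate_add (i : ℕ) (P Q : LaurentPolynomial ℂ) :
    Dop^[i] (P + Q) = Dop^[i] P + Dop^[i] Q := by
  induction i generalizing P Q with
  | zero => rfl
  | succ i ih => simp only [Function.iterate_succ_apply, Dop_add, ih]

theorem Dop_iterate_C_mul_T (i : ℕ) (c : ℂ) (m : ℤ) :
    Dop^[i] (C c * T m) = C (m ^ i * c) * T m := by
  induction i with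
  | zero => simp
  | succ i ih => rw [Function.iterate_succ_apply', ih, Dop_C_mul_T, pow_succ', mul_assoc]

theorem det_Dop_iterate_C_mul_T {m : ℕ} (c : Fin m → ℂ) (e : Fin m → ℤ) :
    (Matrix.of fun i j : Fin m => Dop^[i] (C (c j) * T (e j))).det =
      C ((∏ j, c j) * ∏ i, ∏ j ∈ Ioi i, ((e j : ℂ) - e i)) * T (∑ j, e j) := by
  have hscale : (Matrix.of fun i j : Fin m => Dop^[i] (C (c j) * T (e j))) =
      Matrix.transpose (Matrix.of fun j i => (C (c j) * T (e j)) *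
        C.mapMatrix (Matrix.vandermonde fun j => (e j : ℂ)) j i) := by
    ext i j : 1
    simp only [Matrix.transpose_apply, Matrix.of_apply, RingHom.mapMatrix_apply, Matrix.map_apply,
      Matrix.vandermonde_apply, Dop_iterate_C_mul_T, map_mul, map_pow, map_intCast]
    ring
  rw [hscale, Matrix.det_transpose, Matrix.det_mul_column, ← RingHom.map_det,
    Matrix.det_vandermonde, prod_mul_distrib, ← map_prod, T_sum, map_mul]
  ring

theorem coeff_sum_C_mul_T {ι R : Type*} [Semiring R] (s : Finset ι) (w : ι → R) (E : ι → ℤ)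
    (m : ℤ) : (∑ r ∈ s, C (w r) * T (E r)).coeff m = ∑ r ∈ s, if E r = m then w r else 0 := by
  simp_rw [AddMonoidAlgebra.coeff_sum, Finsupp.finsetSum_apply, ← single_eq_C_mul_T,
    AddMonoidAlgebra.coeff_single, Finsupp.single_apply]

section UniqueTop

variable {ι R : Type*} [Semiring R] {s : Finset ι} {w : ι → R} {E : ι → ℤ} {r₀ : ι}

theorem coeff_sum_C_mul_T_eq_zero_of_lt (hlt : ∀ r ∈ s, r ≠ r₀ → w r ≠ 0 → E r < E r₀) {m : ℤ}
    (hm : E r₀ < m) : (∑ r ∈ s, C (w r) * T (E r)).coeff m = 0 := by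
  rw [coeff_sum_C_mul_T]
  refine sum_eq_zero fun r hr => ite_eq_right_iff.2 fun hE => ?_
  by_contra hw
  have hne : r ≠ r₀ := by rintro rfl; omega
  have := hlt r hr hne hw
  omega

theorem coeff_sum_C_mul_T_top (h₀ : r₀ ∈ s) (hlt : ∀ r ∈ s, r ≠ r₀ → w r ≠ 0 → E r < E r₀) :
    (∑ r ∈ s, C (w r) * T (E r)).coeff (E r₀) = w r₀ := by
  rw [coeff_sum_C_mul_T, sum_eq_single_of_mem r₀ h₀ fun r hr hne => ?_, if_pos rfl]
  refine ite_eq_right_iff.2 fun hE => ?_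
  by_contra hw
  exact (hlt r hr hne hw).ne hE

end UniqueTop

section Pka

variable {n : ℕ} (k : Fin n → ℕ) (a : Fin n → ℂ) (l : ℤ)

/-- Column `j` of `P_{κ,a;l}` is `∑ b, C (pkaCoeff a j b) * T (pkaExp k l j b)`; `b = true`
selects `a_j z^{k_j}`, and the last column `z^l` is padded to `1·z^l + 0·z^l`. -/
def pkaExp : Fin (n + 1) → Bool → ℤ :=
  Fin.snoc (fun j b => if b then (k j : ℤ) else -(k j : ℤ)) fun _ => l

noncomputable def pkaCoeff : Fin (n + 1) → Bool → ℂ :=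
  Fin.snoc (fun j b => if b then a j else (a j)⁻¹) fun b => if b then 1 else 0

def pkaDeg (r : Fin (n + 1) → Bool) : ℤ :=
  ∑ j, pkaExp k l j (r j)

noncomputable def pkaWeight (r : Fin (n + 1) → Bool) : ℂ :=
  (∏ j, pkaCoeff a j (r j)) * ∏ i, ∏ j ∈ Ioi i, ((pkaExp k l j (r j) : ℂ) - pkaExp k l i (r i))

theorem Pka_eq_sum : Pka n k a l = ∑ r, C (pkaWeight k a l r) * T (pkaDeg k l r) := by
  have hcol : Pka n k a l = (Matrix.of fun i j : Fin (n + 1) =>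
      ∑ b, Dop^[i] (C (pkaCoeff a j b) * T (pkaExp k l j b))).det := by
    rw [Pka]
    congr 1
    ext i j : 1
    induction j using Fin.lastCases with
    | last => simp [pkaCoeff, pkaExp, Function.iterate_fixed Dop_zero]
    | cast j => simp [pkaCoeff, pkaExp, PhiL, Dop_iterate_add]
  rw [hcol, Matrix.det_of_sum_columns]
  simp only [det_Dop_iterate_C_mul_T, pkaWeight, pkaDeg]

theorem pkaExp_le_true (j : Fin (n + 1)) (b : Bool) : pkaExp k l j b ≤ pkaExp k l j true := by
  induction j using Fin.lastCases with
  | last => simp [pkaExp]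
  | cast j => cases b <;> simp [pkaExp]

theorem pkaDeg_lt_of_pkaWeight_ne_zero {k} (hkpos : ∀ j, 0 < k j) {r : Fin (n + 1) → Bool}
    (hr : r ≠ fun _ => true) (hw : pkaWeight k a l r ≠ 0) :
    pkaDeg k l r < pkaDeg k l fun _ => true := by
  obtain ⟨j, hj⟩ : ∃ j, r j = false := by simpa [funext_iff] using hr
  refine sum_lt_sum (fun j _ => pkaExp_le_true k l j (r j)) ⟨j, mem_univ j, ?_⟩
  induction j using Fin.lastCases with
  | last =>
    refine absurd ?_ hw
    simp [pkaWeight, prod_eq_zero (mem_univ (Fin.last n)), pkaCoeff, hj]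
  | cast j =>
    simpa [pkaExp, hj] using hkpos j

theorem pkaDeg_true : pkaDeg k l (fun _ => true) = l + ∑ i, (k i : ℤ) := by
  simp [pkaDeg, pkaExp, Fin.sum_univ_castSucc, add_comm]

theorem pkaWeight_true : pkaWeight k a l (fun _ => true) =
    (∏ j, a j) * (∏ i, ∏ j ∈ Ioi i, ((k j : ℂ) - k i)) * ∏ i, ((l : ℂ) - k i) := by
  rw [pkaWeight, Fin.prod_prod_Ioi_sub_castSucc]
  simp [pkaCoeff, pkaExp, Fin.prod_univ_castSucc, mul_assoc]

end Pka

theorem coeff_Pka_eq_zero_of_lt {n : ℕ} {k : Fin n → ℕ} (hkpos : ∀ j, 0 < k j) (a : Fin n → ℂ)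
    {l m : ℤ} (hm : l + ∑ i, (k i : ℤ) < m) : (Pka n k a l).coeff m = 0 := by
  rw [← pkaDeg_true] at hm
  rw [Pka_eq_sum]
  exact coeff_sum_C_mul_T_eq_zero_of_lt (E := pkaDeg k l) (w := pkaWeight k a l)
    (fun r _ hr hw => pkaDeg_lt_of_pkaWeight_ne_zero a l hkpos hr hw) hm

theorem coeff_Pka_top {n : ℕ} {k : Fin n → ℕ} (hkpos : ∀ j, 0 < k j) (a : Fin n → ℂ) (l : ℤ) :
    (Pka n k a l).coeff (l + ∑ i, (k i : ℤ)) =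
      (∏ j, a j) * (∏ i, ∏ j ∈ Ioi i, ((k j : ℂ) - k i)) * ∏ i, ((l : ℂ) - k i) := by
  rw [Pka_eq_sum, ← pkaDeg_true, ← pkaWeight_true]
  exact coeff_sum_C_mul_T_top (E := pkaDeg k l) (w := pkaWeight k a l) (mem_univ _)
    fun r _ hr hw => pkaDeg_lt_of_pkaWeight_ne_zero a l hkpos hr hw

/-- the coefficient of `z^m` in `P_{κ,a;l}` vanishes for `m > l + |κ|`, the
coefficient of `z^{l+|κ|}` equals `(∏ a_j)·(∏_{i<j}(k_j − k_i))·(∏_i (l − k_i))`, and this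
leading coefficient is nonzero iff `l ∉ {k_1,…,k_n}`. -/
theorem stmt_10 (n : ℕ) (k : Fin n → ℕ) (hk : StrictAnti k) (hkpos : ∀ j, 0 < k j)
    (a : Fin n → ℂ) (ha : ∀ j, a j ≠ 0) (l : ℤ) :
    (∀ m : ℤ, l + ∑ i : Fin n, (k i : ℤ) < m → AddMonoidAlgebra.coeff (Pka n k a l) m = 0) ∧
      AddMonoidAlgebra.coeff (Pka n k a l) (l + ∑ i : Fin n, (k i : ℤ)) =
        (∏ j : Fin n, a j) *
          (∏ i : Fin n, ∏ j ∈ Finset.Ioi i, ((k j : ℂ) - (k i : ℂ))) *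
          ∏ i : Fin n, ((l : ℂ) - (k i : ℂ)) ∧
      (AddMonoidAlgebra.coeff (Pka n k a l) (l + ∑ i : Fin n, (k i : ℤ)) ≠ 0 ↔ ∀ i, l ≠ (k i : ℤ)) := by
  have hvdm : ∏ i, ∏ j ∈ Ioi i, ((k j : ℂ) - k i) ≠ 0 := by
    rw [← Matrix.det_vandermonde]
    exact Matrix.det_vandermonde_ne_zero_iff.2 (Nat.cast_injective.comp hk.injective)
  refine ⟨fun m => coeff_Pka_eq_zero_of_lt hkpos a, coeff_Pka_top hkpos a l, ?_⟩
  rw [coeff_Pka_top hkpos a l,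
    mul_ne_zero_iff_left (mul_ne_zero (prod_ne_zero_iff.2 fun j _ => ha j) hvdm), prod_ne_zero_iff]
  simp only [mem_univ, true_implies, sub_ne_zero]
  exact_mod_cast Iff.rfl
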